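/- Partial switch structure of the optimal multicast policy in the nonuniform case (Theorem 2 of the paper): let V : 𝒬 → ℝ be ⊵-monotone. If content u minimizes the state-action cost at state Q, i.e., J_V(Q, u) ≤ J_V(Q, v) for all v ∈ Fin M, and k ∈ Fin K is such that Q u k < N u k and Q + E_{u,k} ⊵ Q (equivalently, there exists j ≥ k with Q u j > 0), then u also minimizes the state-action cost at Q + E_{u,k}, i.e., J_V(Q + E_{u,k}, u) ≤ J_V(Q + E_{u,k}, v) for all v ∈ Fin M. -/

import Mathlib

/-!
Power costs are `⊵`-invariant: a `⊵`-larger queue vector only adds requesters below pending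
ones, and `p` is monotone. Hence passing from `Q` to `Q + E_{u,k}` raises every stage cost by
exactly one. Serving `u` erases the extra request, so `J_V(·, u)` rises by exactly one, whereas
for any other `v` the successor states stay `⊵`-ordered and, `V` being monotone, `J_V(·, v)`
rises by at least one.
-/

open Finset

/-- State space of the nonuniform-channel multicast MDP: request queue matrices capped
by `N`. -/
def QS (M K : ℕ) (N : Fin M → Fin K → ℕ) : Type :=
  {Q : Fin M → Fin K → ℕ // ∀ m k, Q m k ≤ N m k}

/-- Next state when content `u` is multicast in state `Q` and arrival `a` occurs. -/
def nextQ {M K : ℕ} {N : Fin M → Fin K → ℕ} (Q : QS M K N) (u : Fin M)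
    (a : Fin M → Fin K → ℕ) : QS M K N :=
  ⟨fun m k => min ((if m = u then 0 else Q.1 m k) + a m k) (N m k),
    fun _ _ => min_le_right _ _⟩

/-- Power cost of multicasting with per-user power levels `pu` to the users with pending
requests in `q`: the maximum of `pu` over `{k : q k > 0}`, and `0` if this set is empty. -/
noncomputable def PCost {K : ℕ} (pu : Fin K → ℝ) (q : Fin K → ℕ) : ℝ :=
  if h : (Finset.univ.filter fun k => 0 < q k).Nonempty then
    (Finset.univ.filter fun k => 0 < q k).sup' h pu
  else 0

/-- Per-stage cost in the nonuniform case. -/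
noncomputable def gCost {M K : ℕ} {N : Fin M → Fin K → ℕ} (wp wf : ℝ)
    (p : Fin M → Fin K → ℝ) (f : Fin M → ℝ) (Q : QS M K N) (u : Fin M) : ℝ :=
  (∑ m, ∑ k, (Q.1 m k : ℝ)) + wp * PCost (p u) (Q.1 u) + wf * f u

/-- State-action cost function `J_V(Q,u)` in the nonuniform case. -/
noncomputable def JCost {M K : ℕ} {N : Fin M → Fin K → ℕ}
    (𝒜 : Finset (Fin M → Fin K → ℕ)) (ρ : (Fin M → Fin K → ℕ) → ℝ)
    (wp wf : ℝ) (p : Fin M → Fin K → ℝ) (f : Fin M → ℝ)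
    (V : QS M K N → ℝ) (Q : QS M K N) (u : Fin M) : ℝ :=
  gCost wp wf p f Q u + ∑ a ∈ 𝒜, ρ a * V (nextQ Q u a)

/-- The partial order `q² ⊵ q¹` on per-content request queue vectors. -/
def TriVec {K : ℕ} (q₂ q₁ : Fin K → ℕ) : Prop :=
  ∀ k : Fin K,
    ((∃ j, k ≤ j ∧ 0 < q₁ j) → q₁ k ≤ q₂ k) ∧
    ((¬ ∃ j, k ≤ j ∧ 0 < q₁ j) → q₂ k = q₁ k)

/-- The partial order `Q² ⊵ Q¹` on states: `Q² m ⊵ Q¹ m` for every content `m`. -/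
def TriState {M K : ℕ} {N : Fin M → Fin K → ℕ} (Q₂ Q₁ : QS M K N) : Prop :=
  ∀ m, TriVec (Q₂.1 m) (Q₁.1 m)

/-- The state `Q + E_{u,k}`: entry `(u,k)` is increased by 1 (requires `Q u k < N u k`). -/
def addE {M K : ℕ} {N : Fin M → Fin K → ℕ} (Q : QS M K N) (u : Fin M) (k : Fin K)
    (h : Q.1 u k < N u k) : QS M K N :=
  ⟨Function.update Q.1 u (Function.update (Q.1 u) k (Q.1 u k + 1)), by
    intro m i
    rcases eq_or_ne m u with rfl | hm
    · simp only [Function.update_self]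
      rcases eq_or_ne i k with rfl | hi
      · simp only [Function.update_self]; exact h
      · simp only [Function.update_of_ne hi]; exact Q.2 m i
    · simp only [Function.update_of_ne hm]; exact Q.2 m i⟩


section

variable {M K : ℕ} {N : Fin M → Fin K → ℕ}

theorem triVec_iff {q₂ q₁ : Fin K → ℕ} :
    TriVec q₂ q₁ ↔ q₁ ≤ q₂ ∧ ∀ i, q₂ i ≠ q₁ i → ∃ j, i ≤ j ∧ 0 < q₁ j := by
  constructor
  · intro h
    refine ⟨fun i => ?_, fun i hne => ?_⟩
    · by_cases hi : ∃ j, i ≤ j ∧ 0 < q₁ j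
      · exact (h i).1 hi
      · exact ((h i).2 hi).ge
    · by_contra hi
      exact hne ((h i).2 hi)
  · rintro ⟨hle, hex⟩ i
    exact ⟨fun _ => hle i, fun hi => by_contra fun hne => hi (hex i hne)⟩

theorem PCost_eq_of_triVec {pu : Fin K → ℝ} (hpu : Monotone pu) {q₂ q₁ : Fin K → ℕ}
    (h : TriVec q₂ q₁) : PCost pu q₂ = PCost pu q₁ := by
  obtain ⟨hle, hex⟩ := triVec_iff.1 h
  set S₁ := univ.filter fun k => 0 < q₁ k
  set S₂ := univ.filter fun k => 0 < q₂ k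
  by_cases hS₁ : S₁.Nonempty
  · have hsub : S₁ ⊆ S₂ := fun i hi => by
      simp only [S₁, S₂, mem_filter, mem_univ, true_and] at hi ⊢
      exact hi.trans_le (hle i)
    have hS₂ : S₂.Nonempty := hS₁.mono hsub
    rw [PCost, PCost, dif_pos hS₂, dif_pos hS₁]
    refine le_antisymm (sup'_le _ _ fun i hi => ?_) (sup'_mono pu hsub hS₁)
    by_cases hi₁ : 0 < q₁ i
    · exact le_sup' pu (by simpa [S₁] using hi₁)
    · have hi₂ : 0 < q₂ i := by simpa [S₂] using hi
      obtain ⟨j, hij, hj⟩ := hex i (by omega)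
      exact (hpu hij).trans (le_sup' pu (by simpa [S₁] using hj))
  · have : q₂ = q₁ := funext fun i => by
      by_contra hne
      obtain ⟨j, -, hj⟩ := hex i hne
      exact hS₁ ⟨j, by simpa [S₁] using hj⟩
    rw [this]

theorem nextQ_apply (Q : QS M K N) (u : Fin M) (a : Fin M → Fin K → ℕ) (m : Fin M)
    (i : Fin K) :
    (nextQ Q u a).1 m i = min ((if m = u then 0 else Q.1 m i) + a m i) (N m i) :=
  rfl

theorem addE_apply (Q : QS M K N) (u : Fin M) (k : Fin K) (h : Q.1 u k < N u k) (m : Fin M)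
    (i : Fin K) :
    (addE Q u k h).1 m i = Q.1 m i + if m = u ∧ i = k then 1 else 0 := by
  rcases eq_or_ne m u with rfl | hm
  · rcases eq_or_ne i k with rfl | hi
    · simp [addE]
    · simp [addE, hi]
  · simp [addE, hm]

theorem sum_addE (Q : QS M K N) (u : Fin M) (k : Fin K) (h : Q.1 u k < N u k) :
    ∑ m, ∑ i, ((addE Q u k h).1 m i : ℝ) = ∑ m, ∑ i, (Q.1 m i : ℝ) + 1 := by
  simp [addE_apply, sum_add_distrib, ite_and]

theorem nextQ_addE_self (Q : QS M K N) (u : Fin M) (k : Fin K) (h : Q.1 u k < N u k)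
    (a : Fin M → Fin K → ℕ) : nextQ (addE Q u k h) u a = nextQ Q u a := by
  refine Subtype.ext (funext fun m => funext fun i => ?_)
  rw [nextQ_apply, nextQ_apply, addE_apply]
  by_cases hm : m = u <;> simp [hm]

theorem TriState.nextQ {Q₂ Q₁ : QS M K N} (h : TriState Q₂ Q₁) (w : Fin M)
    (a : Fin M → Fin K → ℕ) : TriState (nextQ Q₂ w a) (nextQ Q₁ w a) := by
  intro m
  obtain ⟨hle, hex⟩ := triVec_iff.1 (h m)
  refine triVec_iff.2 ⟨fun i => ?_, fun i hne => ?_⟩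
  · simp only [nextQ_apply]
    have : Q₁.1 m i ≤ Q₂.1 m i := hle i
    split_ifs <;> omega
  · have hm : m ≠ w := by rintro rfl; simp [nextQ_apply] at hne
    simp only [nextQ_apply, if_neg hm] at hne ⊢
    -- entries only change below a pending request, which survives the transition
    obtain ⟨j, hij, hj⟩ := hex i fun heq => hne (by rw [heq])
    exact ⟨j, hij, by have := Q₁.2 m j; omega⟩

section Cost

variable (𝒜 : Finset (Fin M → Fin K → ℕ)) (ρ : (Fin M → Fin K → ℕ) → ℝ) (wp wf : ℝ)
  (p : Fin M → Fin K → ℝ) (f : Fin M → ℝ) (V : QS M K N → ℝ)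

theorem gCost_addE (hp : ∀ m, Monotone (p m)) (Q : QS M K N) (u : Fin M) (k : Fin K)
    (h : Q.1 u k < N u k) (htri : TriState (addE Q u k h) Q) (w : Fin M) :
    gCost wp wf p f (addE Q u k h) w = gCost wp wf p f Q w + 1 := by
  rw [gCost, gCost, sum_addE, PCost_eq_of_triVec (hp w) (htri w)]
  ring

theorem JCost_addE_self (hp : ∀ m, Monotone (p m)) (Q : QS M K N) (u : Fin M) (k : Fin K)
    (h : Q.1 u k < N u k) (htri : TriState (addE Q u k h) Q) :
    JCost 𝒜 ρ wp wf p f V (addE Q u k h) u = JCost 𝒜 ρ wp wf p f V Q u + 1 := by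
  simp only [JCost, gCost_addE wp wf p f hp Q u k h htri, nextQ_addE_self]
  ring

theorem JCost_add_one_le_JCost_addE (hρ : ∀ a ∈ 𝒜, 0 ≤ ρ a) (hp : ∀ m, Monotone (p m))
    (hV : ∀ Q₁ Q₂ : QS M K N, TriState Q₂ Q₁ → V Q₁ ≤ V Q₂) (Q : QS M K N) (u : Fin M)
    (k : Fin K) (h : Q.1 u k < N u k) (htri : TriState (addE Q u k h) Q) (v : Fin M) :
    JCost 𝒜 ρ wp wf p f V Q v + 1 ≤ JCost 𝒜 ρ wp wf p f V (addE Q u k h) v := by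
  have hnext :
      ∑ a ∈ 𝒜, ρ a * V (nextQ Q v a) ≤ ∑ a ∈ 𝒜, ρ a * V (nextQ (addE Q u k h) v a) :=
    sum_le_sum fun a ha => mul_le_mul_of_nonneg_left (hV _ _ (htri.nextQ v a)) (hρ a ha)
  rw [JCost, JCost, gCost_addE wp wf p f hp Q u k h htri]
  linarith

end Cost

end

theorem optimal_policy_partial_switch_structure_general
    {M K : ℕ} (N : Fin M → Fin K → ℕ)
    (𝒜 : Finset (Fin M → Fin K → ℕ)) (ρ : (Fin M → Fin K → ℕ) → ℝ)
    (hρ0 : ∀ a ∈ 𝒜, 0 ≤ ρ a)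
    (wp wf : ℝ) (p : Fin M → Fin K → ℝ) (f : Fin M → ℝ)
    (hpmono : ∀ m, Monotone (p m))
    (V : QS M K N → ℝ)
    (hV : ∀ Q₁ Q₂ : QS M K N, TriState Q₂ Q₁ → V Q₁ ≤ V Q₂) :
    ∀ (Q : QS M K N) (u : Fin M) (k : Fin K) (h : Q.1 u k < N u k),
      TriState (addE Q u k h) Q →
      (∀ v : Fin M, JCost 𝒜 ρ wp wf p f V Q u ≤ JCost 𝒜 ρ wp wf p f V Q v) →
      ∀ v : Fin M, JCost 𝒜 ρ wp wf p f V (addE Q u k h) u ≤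
        JCost 𝒜 ρ wp wf p f V (addE Q u k h) v := by
  intro Q u k h htri hmin v
  calc JCost 𝒜 ρ wp wf p f V (addE Q u k h) u
      = JCost 𝒜 ρ wp wf p f V Q u + 1 :=
        JCost_addE_self 𝒜 ρ wp wf p f V hpmono Q u k h htri
    _ ≤ JCost 𝒜 ρ wp wf p f V Q v + 1 := by linarith [hmin v]
    _ ≤ JCost 𝒜 ρ wp wf p f V (addE Q u k h) v :=
      JCost_add_one_le_JCost_addE 𝒜 ρ wp wf p f V hρ0 hpmono hV Q u k h htri v

/-- Partial switch structure of the optimal policy in the nonuniform case (Theorem 2):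
for a `⊵`-monotone value function `V`, if content `u` minimizes the state-action cost at
`Q`, and `Q u k < N u k` with `Q + E_{u,k} ⊵ Q`, then `u` also minimizes the state-action
cost at `Q + E_{u,k}`. -/
theorem optimal_policy_partial_switch_structure
    {M K : ℕ} (hM : 1 ≤ M) (hK : 1 ≤ K) (N : Fin M → Fin K → ℕ)
    (𝒜 : Finset (Fin M → Fin K → ℕ)) (ρ : (Fin M → Fin K → ℕ) → ℝ)
    (hρ0 : ∀ a ∈ 𝒜, 0 ≤ ρ a) (hρ1 : ∑ a ∈ 𝒜, ρ a = 1)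
    (wp wf : ℝ) (p : Fin M → Fin K → ℝ) (f : Fin M → ℝ)
    (hp0 : ∀ m k, 0 ≤ p m k) (hpmono : ∀ m, Monotone (p m))
    (V : QS M K N → ℝ)
    (hV : ∀ Q₁ Q₂ : QS M K N, TriState Q₂ Q₁ → V Q₁ ≤ V Q₂) :
    ∀ (Q : QS M K N) (u : Fin M) (k : Fin K) (h : Q.1 u k < N u k),
      TriState (addE Q u k h) Q →
      (∀ v : Fin M, JCost 𝒜 ρ wp wf p f V Q u ≤ JCost 𝒜 ρ wp wf p f V Q v) →
      ∀ v : Fin M, JCost 𝒜 ρ wp wf p f V (addE Q u k h) u ≤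
        JCost 𝒜 ρ wp wf p f V (addE Q u k h) v :=
  optimal_policy_partial_switch_structure_general N 𝒜 ρ hρ0 wp wf p f hpmono V hV
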